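/- Let A be a unital C*-algebra and p ∈ A an orthogonal projection (p = p* = p²). Then the multiplication operator M_{p,p}(x) = pxp is a hermitian element of B(A) (i.e., its numerical range is real) if and only if upu*p is hermitian in A for every unitary u ∈ A. -/

import Mathlib

/-!
A state `f` (`‖f‖ = 1 = f 1`) of a unital Banach algebra `A` pulls back along any unital
contraction `Φ`, so `V(Φ a) ⊆ V(a)`. Applied to `T ↦ u T(u*)` this gives `V(upu*p) ⊆ V(M)`.

Conversely, in a C*-algebra an element with real numerical range is self-adjoint (states take real
values on self-adjoint elements, and separate them), so `upu*p = pupu*` for every unitary `u`.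
Differentiating along `u = exp(t w)`, `w` skew-adjoint, shows that `p` commutes with every
skew-adjoint, hence with every element. Then `M` is left multiplication by the self-adjoint `p`,
and `V(M) ⊆ V(p) ⊆ ℝ`.
-/

/-- Algebra numerical range of an element of a complex unital Banach algebra,
defined via states: `V(a) = {f a : f ∈ A*, ‖f‖ = 1 = f 1}`. -/
def numRange (A : Type*) [NormedRing A] [NormedAlgebra ℂ A] (a : A) : Set ℂ :=
  {z | ∃ f : A →L[ℂ] ℂ, ‖f‖ = 1 ∧ f 1 = 1 ∧ f a = z}

open Complex ComplexStarModule

section NormedAlgebra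

variable {A : Type*} [NormedRing A] [NormedAlgebra ℂ A]

theorem numRange_map_subset [NormOneClass A] {B : Type*} [NormedRing B] [NormedAlgebra ℂ B]
    (Φ : A →L[ℂ] B) (hΦ1 : Φ 1 = 1) (hΦ : ‖Φ‖ ≤ 1) (a : A) :
    numRange B (Φ a) ⊆ numRange A a := by
  rintro _ ⟨f, hf, hf1, rfl⟩
  refine ⟨f.comp Φ, le_antisymm ?_ ?_, by simp [hΦ1, hf1], rfl⟩
  · exact (f.opNorm_comp_le Φ).trans (by rw [hf, one_mul]; exact hΦ)
  · simpa [hΦ1, hf1] using (f.comp Φ).le_opNorm 1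

theorem numRange_mul_subset [NormOneClass A] (a : A) :
    numRange (A →L[ℂ] A) (ContinuousLinearMap.mul ℂ A a) ⊆ numRange A a :=
  numRange_map_subset _ (by ext; simp) (ContinuousLinearMap.opNorm_mul_le ℂ A) a

theorem Subalgebra.exists_state_extension (S : Subalgebra ℂ A) (g : S →L[ℂ] ℂ)
    (hg : ‖g‖ = 1) (hg1 : g 1 = 1) :
    ∃ f : A →L[ℂ] ℂ, ‖f‖ = 1 ∧ f 1 = 1 ∧ ∀ s : S, f s = g s := by
  obtain ⟨f, hfg, hf⟩ := exists_extension_norm_eq (Subalgebra.toSubmodule S) g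
  exact ⟨f, hf.trans hg, (hfg (1 : S)).trans hg1, hfg⟩

end NormedAlgebra

theorem IsIdempotentElem.commute_of_commute_commutator {R : Type*} [Ring R] {p w : R}
    (hp : IsIdempotentElem p) (h : Commute p (w * p - p * w)) : Commute p w := by
  have hpp : ∀ x, p * (p * x) = p * x := fun x => by rw [← mul_assoc, hp.eq]
  have h' : p * (w * p) - p * w = w * p - p * (w * p) := by
    simpa only [Commute, SemiconjBy, mul_sub, sub_mul, mul_assoc, hp.eq, hpp] using h
  have hl := congrArg (p * ·) h'
  have hr := congrArg (· * p) h'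
  simp only [mul_sub, sub_mul, mul_assoc, hp.eq, hpp, sub_self, sub_eq_zero] at hl hr
  rw [eq_comm, sub_eq_zero] at hr
  exact hl.symm.trans hr.symm

theorem IsIdempotentElem.commute_of_forall_commute_exp_conj {A : Type*} [NormedRing A]
    [NormedAlgebra ℝ A] [CompleteSpace A] {p w : A} (hp : IsIdempotentElem p)
    (h : ∀ t : ℝ, Commute p (NormedSpace.exp (t • w) * p * NormedSpace.exp (-(t • w)))) :
    Commute p w := by
  have hg : HasDerivAt (fun t : ℝ => NormedSpace.exp (t • w) * p * NormedSpace.exp (-(t • w)))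
      (w * p - p * w) 0 := by
    have := ((hasDerivAt_exp_smul_const w (0 : ℝ)).mul_const p).mul
      (hasDerivAt_exp_smul_const (-w) (0 : ℝ))
    simp only [smul_neg, zero_smul, neg_zero, NormedSpace.exp_zero, one_mul, mul_one, mul_neg]
      at this
    rw [sub_eq_add_neg]
    exact this
  have hc : HasDerivAt (fun _ : ℝ => (0 : A)) (p * (w * p - p * w) - (w * p - p * w) * p) 0 :=
    ((hg.const_mul p).sub (hg.mul_const p)).congr_of_eventuallyEq
      (Filter.Eventually.of_forall fun t => (sub_eq_zero.mpr (h t)).symm)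
  exact hp.commute_of_commute_commutator (sub_eq_zero.mp ((hasDerivAt_const 0 0).unique hc).symm)

section CStarRing

variable {A : Type*} [NormedRing A] [StarRing A] [CStarRing A] [NormedAlgebra ℂ A]

theorem IsSelfAdjoint.norm_add_smul_one_sq_le [StarModule ℂ A] [NormOneClass A] {a : A}
    (ha : IsSelfAdjoint a) (t : ℝ) : ‖a + (t * I) • (1 : A)‖ ^ 2 ≤ ‖a‖ ^ 2 + t ^ 2 := by
  have hstar :
      star (a + (t * I) • 1) * (a + (t * I) • 1) = a * a + ((t : ℂ) ^ 2) • (1 : A) := by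
    have hconj : star ((t : ℂ) * I) = -(t * I) := by simp
    simp only [star_add, star_smul, ha.star_eq, star_one, hconj, add_mul, mul_add, smul_mul_assoc,
      mul_smul_comm, one_mul, mul_one]
    match_scalars <;> ring_nf; simp [I_sq]
  calc ‖a + (t * I) • (1 : A)‖ ^ 2 = ‖a * a + ((t : ℂ) ^ 2) • (1 : A)‖ := by
        rw [sq, ← CStarRing.norm_star_mul_self, hstar]
    _ ≤ ‖a * a‖ + ‖((t : ℂ) ^ 2) • (1 : A)‖ := norm_add_le _ _
    _ ≤ ‖a‖ ^ 2 + t ^ 2 := by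
        gcongr
        · exact (norm_mul_le a a).trans_eq (sq _).symm
        · simp [norm_smul]

theorem IsSelfAdjoint.im_apply_eq_zero [StarModule ℂ A] [NormOneClass A] {a : A}
    (ha : IsSelfAdjoint a) {f : A →L[ℂ] ℂ} (hf : ‖f‖ ≤ 1) (hf1 : f 1 = 1) : (f a).im = 0 := by
  have key : ∀ t : ℝ, (f a).re ^ 2 + ((f a).im + t) ^ 2 ≤ ‖a‖ ^ 2 + t ^ 2 := fun t =>
    calc (f a).re ^ 2 + ((f a).im + t) ^ 2 = ‖f (a + (t * I) • 1)‖ ^ 2 := by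
          simp [hf1, Complex.sq_norm, Complex.normSq_apply]; ring
      _ ≤ ‖a + (t * I) • (1 : A)‖ ^ 2 := by
          gcongr; simpa using f.le_of_opNorm_le hf (a + (t * I) • 1)
      _ ≤ ‖a‖ ^ 2 + t ^ 2 := ha.norm_add_smul_one_sq_le t
  by_contra hne
  set t := (‖a‖ ^ 2 + 1) / (2 * (f a).im)
  have ht : 2 * (f a).im * t = ‖a‖ ^ 2 + 1 := mul_div_cancel₀ _ (by simpa using hne)
  nlinarith [key t, sq_nonneg (f a).re, sq_nonneg (f a).im]

theorem numRange_unitary_conj_apply_subset [NormOneClass A] (u : unitary A) (T : A →L[ℂ] A) :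
    numRange A (u * T (star u)) ⊆ numRange (A →L[ℂ] A) T := by
  have : Nontrivial A := NormOneClass.nontrivial
  let Φ : (A →L[ℂ] A) →L[ℂ] A :=
    (ContinuousLinearMap.mul ℂ A u).comp (ContinuousLinearMap.apply ℂ A (star (u : A)))
  refine numRange_map_subset Φ (by simp [Φ]) (Φ.opNorm_le_bound zero_le_one fun S => ?_) T
  simpa [Φ] using S.le_opNorm (star (u : A))

variable [CompleteSpace A] [StarModule ℂ A]

theorem exists_state_apply_ne_zero [NormOneClass A] {a : A} (ha : IsSelfAdjoint a)
    (ha0 : a ≠ 0) : ∃ f : A →L[ℂ] ℂ, ‖f‖ = 1 ∧ f 1 = 1 ∧ f a ≠ 0 := by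
  let _ : CStarAlgebra A := { }
  have : IsStarNormal a := ha.isStarNormal
  obtain ⟨z, hz, hz0⟩ : ∃ z ∈ spectrum ℂ a, z ≠ 0 := by
    by_contra! h
    exact ha0 (CFC.eq_zero_of_spectrum_subset_zero (R := ℂ) a h)
  -- a character of the commutative C*-algebra generated by `a`, taking the value `z` at `a`
  obtain ⟨φ, hφ⟩ := (StarAlgebra.elemental.bijective_characterSpaceToSpectrum a).2 ⟨z, hz⟩
  have : NormOneClass (StarAlgebra.elemental ℂ a) := ⟨norm_one (α := A)⟩
  set χ := WeakDual.CharacterSpace.toAlgHom φ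
  obtain ⟨f, hf, hf1, hfχ⟩ := (StarAlgebra.elemental ℂ a).toSubalgebra.exists_state_extension
    χ.toContinuousLinearMap (AlgHom.toContinuousLinearMap_norm χ) (map_one χ)
  refine ⟨f, hf, hf1, ?_⟩
  rw [hfχ ⟨a, StarAlgebra.elemental.self_mem ℂ a⟩]
  exact (congrArg Subtype.val hφ).trans_ne hz0

theorem isSelfAdjoint_iff_numRange_subset_real [NormOneClass A] {a : A} :
    IsSelfAdjoint a ↔ numRange A a ⊆ {z : ℂ | ∃ r : ℝ, z = r} := by
  refine ⟨fun ha => ?_, fun h => ?_⟩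
  · rintro _ ⟨f, hf, hf1, rfl⟩
    exact ⟨(f a).re, Complex.ext (by simp) (by simp [ha.im_apply_eq_zero hf.le hf1])⟩
  · rw [← imaginaryPart_eq_zero_iff]
    by_contra hne
    obtain ⟨f, hf, hf1, hfi⟩ := exists_state_apply_ne_zero (ℑ a).2 (by simpa using hne)
    obtain ⟨r, hr⟩ := h ⟨f, hf, hf1, rfl⟩
    have hre := IsSelfAdjoint.im_apply_eq_zero (ℜ a).2 hf.le hf1
    have him := IsSelfAdjoint.im_apply_eq_zero (ℑ a).2 hf.le hf1
    have hfa : f a = f (ℜ a) + I * f (ℑ a) := by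
      conv_lhs => rw [← realPart_add_I_smul_imaginaryPart a]
      simp
    apply hfi
    have := congrArg im hr
    simp [hfa, hre] at this
    exact Complex.ext this him

theorem commute_of_forall_commute_unitary_conj {p : A} (hp : IsIdempotentElem p)
    (h : ∀ u : unitary A, Commute p ((u : A) * p * star (u : A))) (x : A) : Commute p x := by
  have hI : ∀ a : selfAdjoint A, Commute p (I • (a : A)) := fun a => by
    refine hp.commute_of_forall_commute_exp_conj fun t => ?_
    have hu : (selfAdjoint.expUnitary (t • a) : A) = NormedSpace.exp (t • I • (a : A)) := by
      rw [selfAdjoint.expUnitary_coe, selfAdjoint.val_smul, smul_comm]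
    convert h (selfAdjoint.expUnitary (t • a)) using 2
    · rw [hu]
    · rw [hu, NormedSpace.star_exp]
      congr 1
      simp [a.2.star_eq]
  have hre : Commute p (ℜ x : A) := by
    simpa [smul_smul] using (hI (ℜ x)).smul_right (-I)
  rw [← realPart_add_I_smul_imaginaryPart x]
  exact hre.add_right (hI (ℑ x))

end CStarRing

theorem stmt9 (A : Type*) [NormedRing A] [StarRing A] [CStarRing A] [CompleteSpace A]
    [NormedAlgebra ℂ A] [StarModule ℂ A] [NormOneClass A]
    (p : A) (hp_star : star p = p) (hp_idem : p * p = p)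
    (M : A →L[ℂ] A) (hM : ∀ x, M x = p * x * p) :
    (numRange (A →L[ℂ] A) M ⊆ {z : ℂ | ∃ r : ℝ, z = (r : ℂ)}) ↔
      ∀ u : unitary A,
        numRange A ((u : A) * p * star (u : A) * p) ⊆ {z : ℂ | ∃ r : ℝ, z = (r : ℂ)} := by
  refine ⟨fun hMreal u => ?_, fun hreal => ?_⟩
  · have hMu : (u : A) * M (star (u : A)) = u * p * star (u : A) * p := by
      rw [hM]; simp only [mul_assoc]
    exact (hMu ▸ numRange_unitary_conj_apply_subset u M).trans hMreal
  · have hcomm : ∀ u : unitary A, Commute p ((u : A) * p * star (u : A)) := fun u => by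
      have := (isSelfAdjoint_iff_numRange_subset_real.2 (hreal u)).star_eq
      simp only [star_mul, star_star, hp_star] at this
      simpa only [Commute, SemiconjBy, mul_assoc] using this
    have hcentral := commute_of_forall_commute_unitary_conj hp_idem hcomm
    have hML : M = ContinuousLinearMap.mul ℂ A p := by
      ext x
      rw [hM, ContinuousLinearMap.mul_apply', mul_assoc, ← (hcentral x).eq, ← mul_assoc,
        hp_idem]
    rw [hML]
    exact (numRange_mul_subset p).trans (isSelfAdjoint_iff_numRange_subset_real.1 hp_star)
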